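/- Let 1 < q ≤ 2 and let ω : ℝ^d → ℝ be given by ω(y) = (1/2)·‖y‖_q². Then ω is (q−1)-strongly convex on the unit ℓ_q ball B_q(1) = {y : ‖y‖_q ≤ 1} with respect to the ℓ_q norm: for all x, y ∈ B_q(1) and every g ∈ ℝ^d satisfying ω(z) ≥ ω(x) + ⟨g, z − x⟩ for all z ∈ B_q(1), one has ω(y) − ω(x) − ⟨g, y − x⟩ ≥ ((q−1)/2)·‖y − x‖_q². Moreover, the Bregman divergence from 0 satisfies max_{y ∈ B_q(1)} D_ω(y ‖ 0) = 1/2, where D_ω(y ‖ 0) = ω(y) − ω(0) − ⟨∇ω(0), y⟩ = (1/2)·‖y‖_q². -/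

import Mathlib

/-!
The key input is the two-point inequality of Ball, Carlen and Lieb in `ℓ_q`, `1 < q ≤ 2`:
`‖x‖² + (q - 1)‖y‖² ≤ (‖x + y‖² + ‖x - y‖²) / 2`.
Coordinatewise it is the scalar inequality `(a² + (q - 1)b²)^(q/2) ≤ (|a + b|^q + |a - b|^q) / 2`
(Bernoulli's inequality and a twofold monotonicity argument); it is summed using the reverse
Minkowski inequality in `ℓ_(q/2)` on the left and convexity of `t ↦ t^(2/q)` on the right.
Applied to `(u + v)/2` and `(u - v)/2` it says that `ω` is midpoint `(q - 1)`-strongly convex, and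
comparing this along the dyadic points `x + 2⁻ⁿ(y - x)` with the subgradient inequality gives the
claim as `n → ∞`. The Bregman bound is attained at a unit basis vector.
-/

open Finset

/-- The ℓ_q norm of a finite-dimensional real vector, for real `q ≥ 1`. -/
noncomputable def lpNorm {ι : Type*} [Fintype ι] (q : ℝ) (x : ι → ℝ) : ℝ :=
  (∑ j, |x j| ^ q) ^ (1 / q)

/-- The standard inner product on `ℝ^d`. -/
noncomputable def dotp {d : ℕ} (x y : Fin d → ℝ) : ℝ := ∑ i, x i * y i

open Real Filter Topology

section lpNorm

variable {ι : Type*} [Fintype ι] {q : ℝ}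

lemma lpNorm_nonneg (q : ℝ) (x : ι → ℝ) : 0 ≤ lpNorm q x := by
  unfold lpNorm; positivity

lemma lpNorm_rpow (hq : 0 < q) (x : ι → ℝ) : lpNorm q x ^ q = ∑ j, |x j| ^ q := by
  rw [lpNorm, ← rpow_mul (by positivity), one_div_mul_cancel hq.ne', rpow_one]

lemma lpNorm_sq (x : ι → ℝ) : lpNorm q x ^ 2 = (∑ j, |x j| ^ q) ^ (2 / q) := by
  rw [lpNorm, ← rpow_natCast, ← rpow_mul (by positivity)]
  congr 1
  ring

lemma lpNorm_smul (hq : 0 < q) (c : ℝ) (x : ι → ℝ) : lpNorm q (c • x) = |c| * lpNorm q x := by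
  simp only [lpNorm, Pi.smul_apply, smul_eq_mul, abs_mul, mul_rpow (abs_nonneg _) (abs_nonneg _),
    ← mul_sum]
  rw [mul_rpow (by positivity) (by positivity), ← rpow_mul (abs_nonneg c),
    mul_one_div_cancel hq.ne', rpow_one]

lemma lpNorm_inv_smul_self (hq : 0 < q) {x : ι → ℝ} (hx : 0 < lpNorm q x) :
    lpNorm q ((lpNorm q x)⁻¹ • x) = 1 := by
  rw [lpNorm_smul hq, abs_inv, abs_of_pos hx, inv_mul_cancel₀ hx.ne']

lemma lpNorm_add_le (hq : 1 ≤ q) (x y : ι → ℝ) : lpNorm q (x + y) ≤ lpNorm q x + lpNorm q y :=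
  Real.Lp_add_le univ x y hq

lemma lpNorm_le_lpNorm (hq : 0 < q) {x y : ι → ℝ} (h : ∀ j, |x j| ≤ |y j|) :
    lpNorm q x ≤ lpNorm q y := by
  unfold lpNorm
  have hsum : ∑ j, |x j| ^ q ≤ ∑ j, |y j| ^ q :=
    sum_le_sum fun j _ => rpow_le_rpow (abs_nonneg _) (h j) hq.le
  exact rpow_le_rpow (by positivity) hsum (by positivity)

lemma lpNorm_single [DecidableEq ι] (hq : 0 < q) (i : ι) : lpNorm q (Pi.single i 1) = 1 := by
  have h : ∀ j, |(Pi.single i (1 : ℝ) : ι → ℝ) j| ^ q = (Pi.single i 1 : ι → ℝ) j := by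
    intro j
    rcases eq_or_ne j i with rfl | hj
    · simp
    · simp [hj, zero_rpow hq.ne']
  simp [lpNorm, h]

lemma convex_setOf_lpNorm_le (hq : 1 ≤ q) (r : ℝ) :
    Convex ℝ {x : ι → ℝ | lpNorm q x ≤ r} := by
  intro x hx y hy a b ha hb hab
  calc lpNorm q (a • x + b • y) ≤ a * lpNorm q x + b * lpNorm q y := by
        grw [lpNorm_add_le hq, lpNorm_smul (by linarith), lpNorm_smul (by linarith),
          abs_of_nonneg ha, abs_of_nonneg hb]
    _ ≤ a * r + b * r := by gcongr <;> assumption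
    _ = r := by rw [← add_mul, hab, one_mul]

lemma one_le_lpNorm_smul_add_smul {r : ℝ} (hr0 : 0 < r) (hr1 : r ≤ 1) {u v : ι → ℝ}
    (hu0 : 0 ≤ u) (hv0 : 0 ≤ v) (hu : lpNorm r u = 1) (hv : lpNorm r v = 1) {α β : ℝ}
    (hα : 0 ≤ α) (hβ : 0 ≤ β) (hαβ : α + β = 1) : 1 ≤ lpNorm r (α • u + β • v) := by
  have hconc : ∀ j, α * |u j| ^ r + β * |v j| ^ r ≤ |(α • u + β • v) j| ^ r := by
    intro j
    have hw : |(α • u + β • v) j| = α * |u j| + β * |v j| := by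
      rw [abs_of_nonneg (add_nonneg (smul_nonneg hα hu0) (smul_nonneg hβ hv0) j),
        abs_of_nonneg (hu0 j), abs_of_nonneg (hv0 j)]
      rfl
    rw [hw]
    exact (concaveOn_rpow hr0.le hr1).2 (Set.mem_Ici.2 (abs_nonneg _))
      (Set.mem_Ici.2 (abs_nonneg _)) hα hβ hαβ
  refine one_le_rpow ?_ (by positivity)
  calc (1 : ℝ) = α * ∑ j, |u j| ^ r + β * ∑ j, |v j| ^ r := by
        rw [← lpNorm_rpow hr0, ← lpNorm_rpow hr0, hu, hv, one_rpow, mul_one, mul_one, hαβ]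
    _ ≤ ∑ j, |(α • u + β • v) j| ^ r := by
        rw [mul_sum, mul_sum, ← sum_add_distrib]
        exact sum_le_sum fun j _ => hconc j

lemma lpNorm_add_le_lpNorm_add_of_le_one {r : ℝ} (hr0 : 0 < r) (hr1 : r ≤ 1) {a b : ι → ℝ}
    (ha : 0 ≤ a) (hb : 0 ≤ b) : lpNorm r a + lpNorm r b ≤ lpNorm r (a + b) := by
  rcases (lpNorm_nonneg r a).eq_or_lt with hA | hA
  · rw [← hA, zero_add]
    refine lpNorm_le_lpNorm hr0 fun j => ?_
    rw [abs_of_nonneg (hb j), abs_of_nonneg (add_nonneg ha hb j)]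
    exact le_add_of_nonneg_left (ha j)
  rcases (lpNorm_nonneg r b).eq_or_lt with hB | hB
  · rw [← hB, add_zero]
    refine lpNorm_le_lpNorm hr0 fun j => ?_
    rw [abs_of_nonneg (ha j), abs_of_nonneg (add_nonneg ha hb j)]
    exact le_add_of_nonneg_right (hb j)
  set A := lpNorm r a
  set B := lpNorm r b
  set S := A + B
  have hS : 0 < S := add_pos hA hB
  have hsplit : a + b = S • ((A / S) • (A⁻¹ • a) + (B / S) • (B⁻¹ • b)) := by
    have hA' : S * (A / S * A⁻¹) = 1 := by field_simp
    have hB' : S * (B / S * B⁻¹) = 1 := by field_simp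
    simp only [smul_add, smul_smul, hA', hB', one_smul]
  have hone := one_le_lpNorm_smul_add_smul hr0 hr1 (smul_nonneg (inv_nonneg.2 hA.le) ha)
    (smul_nonneg (inv_nonneg.2 hB.le) hb) (lpNorm_inv_smul_self hr0 hA)
    (lpNorm_inv_smul_self hr0 hB) (div_nonneg hA.le hS.le) (div_nonneg hB.le hS.le)
    (by rw [← add_div, div_self hS.ne'])
  rw [hsplit, lpNorm_smul hr0, abs_of_pos hS]
  exact le_mul_of_one_le_right hS.le hone

end lpNorm

section scalar

lemma nonneg_of_hasDerivAt_nonneg_of_eq_zero {f f' : ℝ → ℝ} {a b t : ℝ}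
    (hf : ContinuousOn f (Set.Icc a b)) (hf' : ∀ s ∈ Set.Ioo a b, HasDerivAt f (f' s) s)
    (hf'₀ : ∀ s ∈ Set.Ioo a b, 0 ≤ f' s) (ha : f a = 0) (ht : t ∈ Set.Icc a b) : 0 ≤ f t := by
  have hmono : MonotoneOn f (Set.Icc a b) := by
    refine monotoneOn_of_hasDerivWithinAt_nonneg (f' := f') (convex_Icc a b) hf ?_ ?_ <;>
      rw [interior_Icc]
    · exact fun s hs => (hf' s hs).hasDerivWithinAt
    · exact hf'₀
  exact ha ▸ hmono (Set.left_mem_Icc.2 (ht.1.trans ht.2)) ht ht.1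

lemma hasDerivAt_one_add_rpow (p : ℝ) {s : ℝ} (hs : -1 < s) :
    HasDerivAt (fun s : ℝ => (1 + s) ^ p) (p * (1 + s) ^ (p - 1)) s := by
  simpa using ((hasDerivAt_id s).const_add 1).rpow_const (p := p)
    (Or.inl (by simp only [id]; linarith))

lemma hasDerivAt_one_sub_rpow (p : ℝ) {s : ℝ} (hs : s < 1) :
    HasDerivAt (fun s : ℝ => (1 - s) ^ p) (-(p * (1 - s) ^ (p - 1))) s := by
  simpa using ((hasDerivAt_id s).const_sub 1).rpow_const (p := p)
    (Or.inl (by simp only [id]; linarith))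

lemma two_le_one_add_rpow_add_one_sub_rpow {p : ℝ} (hp : p ≤ 0) {s : ℝ} (hs : |s| < 1) :
    2 ≤ (1 + s) ^ p + (1 - s) ^ p := by
  obtain ⟨hs1, hs2⟩ := abs_lt.1 hs
  have hprod : 1 ≤ (1 + s) ^ p * (1 - s) ^ p := by
    rw [← mul_rpow (by linarith) (by linarith)]
    exact one_le_rpow_of_pos_of_le_one_of_nonpos (by nlinarith) (by nlinarith [sq_nonneg s]) hp
  have := rpow_pos_of_pos (by linarith : 0 < 1 + s) p
  have := rpow_pos_of_pos (by linarith : 0 < 1 - s) p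
  nlinarith [sq_nonneg ((1 + s) ^ p - (1 - s) ^ p)]

lemma two_mul_mul_le_one_add_rpow_sub_one_sub_rpow {p : ℝ} (hp0 : 0 ≤ p) (hp1 : p ≤ 1) {t : ℝ}
    (ht : t ∈ Set.Icc (0 : ℝ) 1) : 2 * p * t ≤ (1 + t) ^ p - (1 - t) ^ p := by
  have := nonneg_of_hasDerivAt_nonneg_of_eq_zero
    (f := fun s => (1 + s) ^ p - (1 - s) ^ p - 2 * p * s)
    (f' := fun s => p * ((1 + s) ^ (p - 1) + (1 - s) ^ (p - 1) - 2))
    (by fun_prop (disch := assumption)) (fun s hs => ?_) (fun s hs => ?_) (by simp) ht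
  · linarith
  · refine (((hasDerivAt_one_add_rpow p (by linarith [hs.1])).sub
      (hasDerivAt_one_sub_rpow p hs.2)).sub ((hasDerivAt_id s).const_mul (2 * p))).congr_deriv ?_
    ring
  · exact mul_nonneg hp0 (sub_nonneg.2 (two_le_one_add_rpow_add_one_sub_rpow (by linarith)
      (abs_lt.2 ⟨by linarith [hs.1], hs.2⟩)))

variable {q : ℝ}

lemma two_add_mul_sq_le_one_add_rpow_add_one_sub_rpow (hq1 : 1 ≤ q) (hq2 : q ≤ 2) {t : ℝ}
    (ht : t ∈ Set.Icc (0 : ℝ) 1) : 2 + q * (q - 1) * t ^ 2 ≤ (1 + t) ^ q + (1 - t) ^ q := by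
  have := nonneg_of_hasDerivAt_nonneg_of_eq_zero
    (f := fun s => (1 + s) ^ q + (1 - s) ^ q - 2 - q * (q - 1) * s ^ 2)
    (f' := fun s => q * ((1 + s) ^ (q - 1) - (1 - s) ^ (q - 1) - 2 * (q - 1) * s))
    (by fun_prop (disch := linarith)) (fun s hs => ?_) (fun s hs => ?_) (by norm_num) ht
  · linarith
  · refine ((((hasDerivAt_one_add_rpow q (by linarith [hs.1])).add
      (hasDerivAt_one_sub_rpow q hs.2)).sub_const 2).sub
        ((hasDerivAt_pow 2 s).const_mul (q * (q - 1)))).congr_deriv ?_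
    ring
  · exact mul_nonneg (by linarith) (sub_nonneg.2 (two_mul_mul_le_one_add_rpow_sub_one_sub_rpow
      (by linarith) (by linarith) (Set.Ioo_subset_Icc_self hs)))

lemma sq_rpow_div_two (a q : ℝ) : (a ^ 2) ^ (q / 2) = |a| ^ q := by
  rw [rpow_div_two_eq_sqrt q (sq_nonneg a), sqrt_sq_eq_abs]

lemma one_add_mul_sq_rpow_le (hq1 : 1 ≤ q) (hq2 : q ≤ 2) {t : ℝ} (ht : |t| ≤ 1) :
    (1 + (q - 1) * t ^ 2) ^ (q / 2) ≤ (|1 + t| ^ q + |1 - t| ^ q) / 2 := by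
  obtain ⟨ht1, ht2⟩ := abs_le.1 ht
  have hsym : |1 + t| ^ q + |1 - t| ^ q = (1 + |t|) ^ q + (1 - |t|) ^ q := by
    rw [abs_of_nonneg (by linarith : 0 ≤ 1 + t), abs_of_nonneg (by linarith : 0 ≤ 1 - t)]
    rcases le_total 0 t with h | h
    · rw [abs_of_nonneg h]
    · rw [abs_of_nonpos h, sub_neg_eq_add, ← sub_eq_add_neg, add_comm]
  calc (1 + (q - 1) * t ^ 2) ^ (q / 2) ≤ 1 + q / 2 * ((q - 1) * t ^ 2) :=
        rpow_one_add_le_one_add_mul_self (by nlinarith) (by linarith) (by linarith)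
    _ = (2 + q * (q - 1) * |t| ^ 2) / 2 := by rw [sq_abs]; ring
    _ ≤ ((1 + |t|) ^ q + (1 - |t|) ^ q) / 2 := by
        gcongr ?_ / 2
        exact two_add_mul_sq_le_one_add_rpow_add_one_sub_rpow hq1 hq2 ⟨abs_nonneg t, ht⟩
    _ = (|1 + t| ^ q + |1 - t| ^ q) / 2 := by rw [hsym]

lemma sq_add_mul_sq_rpow_le (hq1 : 1 ≤ q) (hq2 : q ≤ 2) (a b : ℝ) :
    (a ^ 2 + (q - 1) * b ^ 2) ^ (q / 2) ≤ (|a + b| ^ q + |a - b| ^ q) / 2 := by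
  wlog hba : b ^ 2 ≤ a ^ 2 generalizing a b
  · have hab := (not_le.1 hba).le
    calc (a ^ 2 + (q - 1) * b ^ 2) ^ (q / 2) ≤ (b ^ 2 + (q - 1) * a ^ 2) ^ (q / 2) :=
          rpow_le_rpow (by nlinarith [sq_nonneg a, sq_nonneg b]) (by nlinarith) (by linarith)
      _ ≤ (|b + a| ^ q + |b - a| ^ q) / 2 := this b a hab
      _ = (|a + b| ^ q + |a - b| ^ q) / 2 := by rw [add_comm b, abs_sub_comm]
  rcases eq_or_ne a 0 with rfl | ha
  · obtain rfl : b = 0 := by nlinarith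
    simp [zero_rpow (by linarith : q / 2 ≠ 0), zero_rpow (by linarith : q ≠ 0)]
  set t := b / a
  have hb : b = a * t := (mul_div_cancel₀ b ha).symm
  have ht : |t| ≤ 1 := by
    rw [abs_div, div_le_one (abs_pos.2 ha)]
    exact sq_le_sq.1 hba
  have hfactor : ∀ c, |a * c| ^ q = |a| ^ q * |c| ^ q := fun c => by
    rw [abs_mul, mul_rpow (abs_nonneg a) (abs_nonneg c)]
  calc (a ^ 2 + (q - 1) * b ^ 2) ^ (q / 2) = |a| ^ q * (1 + (q - 1) * t ^ 2) ^ (q / 2) := by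
        rw [hb, ← sq_rpow_div_two, ← mul_rpow (sq_nonneg a) (by nlinarith)]
        ring_nf
    _ ≤ |a| ^ q * ((|1 + t| ^ q + |1 - t| ^ q) / 2) := by
        gcongr
        exact one_add_mul_sq_rpow_le hq1 hq2 ht
    _ = (|a + b| ^ q + |a - b| ^ q) / 2 := by
        rw [hb, show a + a * t = a * (1 + t) by ring, show a - a * t = a * (1 - t) by ring,
          hfactor, hfactor]
        ring

end scalar

section BallCarlenLieb

variable {ι : Type*} [Fintype ι] {q : ℝ}

lemma lpNorm_sq_eq_lpNorm_div_two (x : ι → ℝ) :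
    lpNorm q x ^ 2 = lpNorm (q / 2) (fun j => x j ^ 2) := by
  rw [lpNorm_sq, lpNorm, one_div_div]
  simp only [abs_pow, sq_abs, sq_rpow_div_two]

theorem lpNorm_sq_add_mul_lpNorm_sq_le (hq1 : 1 ≤ q) (hq2 : q ≤ 2) (x y : ι → ℝ) :
    lpNorm q x ^ 2 + (q - 1) * lpNorm q y ^ 2 ≤
      (lpNorm q (x + y) ^ 2 + lpNorm q (x - y) ^ 2) / 2 := by
  have hq0 : 0 < q := by linarith
  set U := ∑ j, |(x + y) j| ^ q
  set V := ∑ j, |(x - y) j| ^ q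
  have hpointwise : ∀ j, (x j ^ 2 + (q - 1) * y j ^ 2) ^ (q / 2) ≤
      (|(x + y) j| ^ q + |(x - y) j| ^ q) / 2 :=
    fun j => sq_add_mul_sq_rpow_le hq1 hq2 (x j) (y j)
  have hconv : ((U + V) / 2) ^ (2 / q) ≤ (U ^ (2 / q) + V ^ (2 / q)) / 2 := by
    have h := (convexOn_rpow (p := 2 / q) (by rw [le_div_iff₀ hq0]; linarith)).2
      (Set.mem_Ici.2 (by positivity : 0 ≤ U)) (Set.mem_Ici.2 (by positivity : 0 ≤ V))
      (by norm_num : (0 : ℝ) ≤ 1 / 2) (by norm_num : (0 : ℝ) ≤ 1 / 2) (by norm_num)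
    simp only [smul_eq_mul] at h
    rw [show (U + V) / 2 = 1 / 2 * U + 1 / 2 * V by ring]
    linarith
  set a : ι → ℝ := fun j => x j ^ 2
  set b : ι → ℝ := (q - 1) • fun j => y j ^ 2
  have ha : 0 ≤ a := fun j => sq_nonneg _
  have hb : 0 ≤ b := smul_nonneg (by linarith) fun j => sq_nonneg _
  calc lpNorm q x ^ 2 + (q - 1) * lpNorm q y ^ 2 = lpNorm (q / 2) a + lpNorm (q / 2) b := by
        rw [lpNorm_smul (by positivity), abs_of_nonneg (by linarith), lpNorm_sq_eq_lpNorm_div_two,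
          lpNorm_sq_eq_lpNorm_div_two]
    _ ≤ lpNorm (q / 2) (a + b) :=
        lpNorm_add_le_lpNorm_add_of_le_one (by positivity) (by linarith) ha hb
    _ = (∑ j, (x j ^ 2 + (q - 1) * y j ^ 2) ^ (q / 2)) ^ (2 / q) := by
        rw [lpNorm, one_div_div]
        simp only [abs_of_nonneg (add_nonneg ha hb _)]
        rfl
    _ ≤ ((U + V) / 2) ^ (2 / q) := by
        gcongr
        rw [← sum_add_distrib, sum_div]
        exact sum_le_sum fun j _ => hpointwise j
    _ ≤ (U ^ (2 / q) + V ^ (2 / q)) / 2 := hconv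
    _ = (lpNorm q (x + y) ^ 2 + lpNorm q (x - y) ^ 2) / 2 := by rw [lpNorm_sq, lpNorm_sq]

lemma half_lpNorm_sq_midpoint_le (hq1 : 1 ≤ q) (hq2 : q ≤ 2) (u v : ι → ℝ) :
    1 / 2 * lpNorm q ((1 / 2 : ℝ) • (u + v)) ^ 2 ≤
      (1 / 2 * lpNorm q u ^ 2 + 1 / 2 * lpNorm q v ^ 2) / 2 -
        (q - 1) / 2 * lpNorm q (u - v) ^ 2 / 4 := by
  have h := lpNorm_sq_add_mul_lpNorm_sq_le hq1 hq2 ((1 / 2 : ℝ) • (u + v)) ((1 / 2 : ℝ) • (u - v))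
  rw [show (1 / 2 : ℝ) • (u + v) + (1 / 2 : ℝ) • (u - v) = u by module,
    show (1 / 2 : ℝ) • (u + v) - (1 / 2 : ℝ) • (u - v) = v by module,
    lpNorm_smul (by linarith) _ (u - v), abs_of_pos (by norm_num)] at h
  linarith

end BallCarlenLieb

theorem le_sub_sub_of_midpoint_le {E : Type*} [AddCommGroup E] [Module ℝ E] {s : Set E}
    (hs : Convex ℝ s) {f Q : E → ℝ} (ℓ : E →ₗ[ℝ] ℝ)
    (hQ : ∀ (c : ℝ) (v : E), Q (c • v) = c ^ 2 * Q v)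
    (hmid : ∀ u ∈ s, ∀ v ∈ s, f ((1 / 2 : ℝ) • (u + v)) ≤ (f u + f v) / 2 - Q (u - v) / 4)
    {x y : E} (hx : x ∈ s) (hy : y ∈ s) (hsub : ∀ z ∈ s, f x + ℓ (z - x) ≤ f z) :
    Q (y - x) ≤ f y - f x - ℓ (y - x) := by
  set c : ℕ → ℝ := fun n => (1 / 2) ^ n
  have hc0 : ∀ n, 0 < c n := fun n => by positivity
  have hz : ∀ n, x + c n • (y - x) ∈ s := fun n =>
    hs.add_smul_sub_mem hx hy ⟨(hc0 n).le, pow_le_one₀ (by norm_num) (by norm_num)⟩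
  have hdyadic : ∀ n, f (x + c n • (y - x)) ≤ f x + c n * (f y - f x - Q (y - x) * (1 - c n)) := by
    intro n
    induction n with
    | zero => simp [c]
    | succ n ih =>
      have h := hmid x hx _ (hz n)
      have hc : c (n + 1) = c n / 2 := by simp only [c, pow_succ]; ring
      rw [show (1 / 2 : ℝ) • (x + (x + c n • (y - x))) = x + c (n + 1) • (y - x) by
          rw [hc]; module,
        show x - (x + c n • (y - x)) = (-c n) • (y - x) by module, hQ, neg_sq] at h
      rw [hc] at h ⊢
      linarith
  have hstep : ∀ n, Q (y - x) * (1 - c n) ≤ f y - f x - ℓ (y - x) := by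
    intro n
    have hsub_n := hsub _ (hz n)
    rw [add_sub_cancel_left, map_smul, smul_eq_mul] at hsub_n
    have hscaled : c n * ℓ (y - x) ≤ c n * (f y - f x - Q (y - x) * (1 - c n)) := by
      linarith [hdyadic n]
    linarith [le_of_mul_le_mul_left hscaled (hc0 n)]
  have hlim : Tendsto c atTop (𝓝 0) :=
    tendsto_pow_atTop_nhds_zero_of_lt_one (by norm_num : (0 : ℝ) ≤ 1 / 2) (by norm_num)
  simpa using le_of_tendsto' ((hlim.const_sub 1).const_mul (Q (y - x))) hstep

/-- **Proposition 3.2 of the paper**: for `1 < q ≤ 2`, the mirror map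
`ω(y) = (1/2)‖y‖_q²` is `(q-1)`-strongly convex on the unit ℓ_q ball with respect to
the ℓ_q norm, and the Bregman divergence from `0` satisfies
`max_{y ∈ B_q(1)} D_ω(y‖0) = 1/2`. -/
theorem lq_norm_sq_strongly_convex (d : ℕ) (hd : 0 < d)
    (q : ℝ) (hq1 : 1 < q) (hq2 : q ≤ 2) :
    (∀ x : Fin d → ℝ, lpNorm q x ≤ 1 → ∀ y : Fin d → ℝ, lpNorm q y ≤ 1 →
      ∀ g : Fin d → ℝ,
      (∀ z : Fin d → ℝ, lpNorm q z ≤ 1 →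
        (1 / 2) * lpNorm q x ^ 2 + dotp g (z - x) ≤ (1 / 2) * lpNorm q z ^ 2) →
      ((q - 1) / 2) * lpNorm q (y - x) ^ 2 ≤
        (1 / 2) * lpNorm q y ^ 2 - (1 / 2) * lpNorm q x ^ 2 - dotp g (y - x)) ∧
    IsGreatest ((fun y : Fin d → ℝ => (1 / 2) * lpNorm q y ^ 2) ''
        {y | lpNorm q y ≤ 1}) (1 / 2) := by
  have hq0 : 0 < q := by linarith
  refine ⟨fun x hx y hy g hg => ?_, ?_⟩
  · refine le_sub_sub_of_midpoint_le (convex_setOf_lpNorm_le hq1.le 1)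
      (f := fun v => 1 / 2 * lpNorm q v ^ 2) (Q := fun v => (q - 1) / 2 * lpNorm q v ^ 2)
      (dotProductBilin ℝ ℝ g) (fun c v => ?_)
      (fun u _ v _ => half_lpNorm_sq_midpoint_le hq1.le hq2 u v) hx hy hg
    simp only [lpNorm_smul hq0, mul_pow, sq_abs]
    ring
  · refine ⟨⟨Pi.single ⟨0, hd⟩ 1, ?_, ?_⟩, ?_⟩
    · simp [lpNorm_single hq0]
    · simp [lpNorm_single hq0]
    · rintro _ ⟨y, hy, rfl⟩
      nlinarith [lpNorm_nonneg q y, hy.out]
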